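/- Under the Doeblin minorization P^{t₀}(x,y) ≥ ε₀ π(y) for all x,y, the return time T_u^+ of state u satisfies the exponential tail bound: for every integer A ≥ 2t₀, P_u(T_u^+ ≥ A) ≤ exp(−(ε₀/(2t₀))·A·π(u)). -/
import Mathlib


open Finset

/-- Under the Doeblin minorization, the return time `T_u^+` of state `u`
has exponential tail: for `A ≥ 2t₀`, `P_u(T_u^+ ≥ A) ≤ exp(−(ε₀/(2t₀))·A·π(u))`.
Here `P_u(T_u^+ ≥ A)` is the probability, starting from `u`, of avoiding `u` during
the first `A − 1` steps, expressed via the taboo matrix `Q` (the column of `u` zeroed). -/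
theorem doeblin_return_time_tail
    {S : Type*} [Fintype S] [DecidableEq S]
    (P : Matrix S S ℝ)
    (hP_nonneg : ∀ x y, 0 ≤ P x y)
    (hP_row : ∀ x, ∑ y, P x y = 1)
    (t₀ : ℕ) (ht₀ : 1 ≤ t₀)
    (ε₀ : ℝ) (hε₀ : ε₀ ∈ Set.Ioo (0 : ℝ) 1)
    (π : S → ℝ)
    (hπ_nonneg : ∀ x, 0 ≤ π x)
    (hπ_sum : ∑ x, π x = 1)
    (hdoeblin : ∀ x y, ε₀ * π y ≤ (P ^ t₀) x y)
    (u : S) (hπu : 0 < π u)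
    (Q : Matrix S S ℝ)
    (hQ : ∀ x y, Q x y = if y = u then 0 else P x y) :
    ∀ A : ℕ, 2 * t₀ ≤ A →
      ∑ y, (Q ^ (A - 1)) u y ≤ Real.exp (-(ε₀ / (2 * t₀)) * A * π u) := by
  obtain ⟨hε₀0, hε₀1⟩ := hε₀
  have hπu1 : π u ≤ 1 := by
    calc π u ≤ ∑ x, π x := Finset.single_le_sum (fun x _ => hπ_nonneg x) (mem_univ u)
    _ = 1 := hπ_sum
  set a : ℝ := ε₀ * π u with ha
  have ha0 : 0 < a := mul_pos hε₀0 hπu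
  have ha1 : a ≤ 1 := by nlinarith
  have hQ_nonneg : ∀ x y, 0 ≤ Q x y := by
    intro x y; rw [hQ]; split
    · exact le_refl 0
    · exact hP_nonneg x y
  have hQle : ∀ x y, Q x y ≤ P x y := by
    intro x y; rw [hQ]; split
    · exact hP_nonneg x y
    · exact le_refl _
  have hPpow_nonneg : ∀ n x y, 0 ≤ (P ^ n) x y := by
    intro n
    induction n with
    | zero => intro x y; simp [Matrix.one_apply]; split <;> norm_num
    | succ m ih =>
      intro x y
      rw [pow_succ, Matrix.mul_apply]
      exact Finset.sum_nonneg fun z _ => mul_nonneg (ih x z) (hP_nonneg z y)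
  have hQpow_nonneg : ∀ n x y, 0 ≤ (Q ^ n) x y := by
    intro n
    induction n with
    | zero => intro x y; simp [Matrix.one_apply]; split <;> norm_num
    | succ m ih =>
      intro x y
      rw [pow_succ, Matrix.mul_apply]
      exact Finset.sum_nonneg fun z _ => mul_nonneg (ih x z) (hQ_nonneg z y)
  have hQpow_le : ∀ n x y, (Q ^ n) x y ≤ (P ^ n) x y := by
    intro n
    induction n with
    | zero => intro x y; simp
    | succ m ih =>
      intro x y
      rw [pow_succ, pow_succ, Matrix.mul_apply, Matrix.mul_apply]
      apply Finset.sum_le_sum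
      intro z _
      exact mul_le_mul (ih x z) (hQle z y) (hQ_nonneg z y) (hPpow_nonneg m x z)
  have hPpow_row : ∀ n x, ∑ y, (P ^ n) x y = 1 := by
    intro n
    induction n with
    | zero => intro x; simp [Matrix.one_apply]
    | succ m ih =>
      intro x
      rw [pow_succ]
      simp only [Matrix.mul_apply]
      rw [Finset.sum_comm]
      calc ∑ z, ∑ y, (P ^ m) x z * P z y
          = ∑ z, (P ^ m) x z * ∑ y, P z y := by
            apply Finset.sum_congr rfl; intro z _; rw [Finset.mul_sum]
        _ = ∑ z, (P ^ m) x z := by simp [hP_row]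
        _ = 1 := ih x
  have hQrow : ∀ n x, ∑ y, (Q ^ n) x y ≤ 1 := by
    intro n x
    calc ∑ y, (Q ^ n) x y ≤ ∑ y, (P ^ n) x y :=
          Finset.sum_le_sum fun y _ => hQpow_le n x y
      _ = 1 := hPpow_row n x
  -- row sums are nonincreasing under adding powers
  have hmono : ∀ m n x, ∑ y, (Q ^ (m + n)) x y ≤ ∑ y, (Q ^ m) x y := by
    intro m n x
    rw [pow_add]
    simp only [Matrix.mul_apply]
    rw [Finset.sum_comm]
    calc ∑ z, ∑ y, (Q ^ m) x z * (Q ^ n) z y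
        = ∑ z, (Q ^ m) x z * ∑ y, (Q ^ n) z y := by
          apply Finset.sum_congr rfl; intro z _; rw [Finset.mul_sum]
      _ ≤ ∑ z, (Q ^ m) x z * 1 := by
          apply Finset.sum_le_sum; intro z _
          exact mul_le_mul_of_nonneg_left (hQrow n z) (hQpow_nonneg m x z)
      _ = ∑ z, (Q ^ m) x z := by simp
  -- column u of Q^n vanishes for n ≥ 1
  have hQpow_u : ∀ n x, (Q ^ (n + 1)) x u = 0 := by
    intro n x
    rw [pow_succ, Matrix.mul_apply]
    apply Finset.sum_eq_zero
    intro z _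
    rw [hQ]; simp
  -- key contraction at time t₀
  have ht₀row : ∀ x, ∑ y, (Q ^ t₀) x y ≤ 1 - a := by
    intro x
    obtain ⟨m, rfl⟩ : ∃ m, t₀ = m + 1 := ⟨t₀ - 1, by omega⟩
    have h1 : ∑ y, (Q ^ (m + 1)) x y = ∑ y ∈ univ.erase u, (Q ^ (m + 1)) x y := by
      rw [Finset.sum_erase _ (hQpow_u m x)]
    rw [h1]
    have h2 : ∑ y ∈ univ.erase u, (Q ^ (m + 1)) x y
        ≤ ∑ y ∈ univ.erase u, (P ^ (m + 1)) x y :=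
      Finset.sum_le_sum fun y _ => hQpow_le (m + 1) x y
    have h3 : ∑ y ∈ univ.erase u, (P ^ (m + 1)) x y = 1 - (P ^ (m + 1)) x u := by
      rw [Finset.sum_erase_eq_sub (mem_univ u), hPpow_row]
    have h4 := hdoeblin x u
    linarith
  -- geometric decay along multiples of t₀
  have hgeom : ∀ k x, ∑ y, (Q ^ (k * t₀)) x y ≤ (1 - a) ^ k := by
    intro k
    induction k with
    | zero => intro x; simpa using hQrow 0 x
    | succ j ih =>
      intro x
      have hrw : (j + 1) * t₀ = j * t₀ + t₀ := by ring
      rw [hrw, pow_add]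
      simp only [Matrix.mul_apply]
      rw [Finset.sum_comm]
      calc ∑ z, ∑ y, (Q ^ (j * t₀)) x z * (Q ^ t₀) z y
          = ∑ z, (Q ^ (j * t₀)) x z * ∑ y, (Q ^ t₀) z y := by
            apply Finset.sum_congr rfl; intro z _; rw [Finset.mul_sum]
        _ ≤ ∑ z, (Q ^ (j * t₀)) x z * (1 - a) := by
            apply Finset.sum_le_sum; intro z _
            exact mul_le_mul_of_nonneg_left (ht₀row z) (hQpow_nonneg _ x z)
        _ = (∑ z, (Q ^ (j * t₀)) x z) * (1 - a) := by rw [Finset.sum_mul]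
        _ ≤ (1 - a) ^ j * (1 - a) := by
            apply mul_le_mul_of_nonneg_right (ih x); linarith
        _ = (1 - a) ^ (j + 1) := by rw [pow_succ]
  intro A hA
  set k : ℕ := (A - 1) / t₀ with hk
  have hkt : k * t₀ ≤ A - 1 := Nat.div_mul_le_self _ _
  have hup : A ≤ t₀ * k + t₀ := by
    have h1 : t₀ * k + (A - 1) % t₀ = A - 1 := Nat.div_add_mod (A - 1) t₀
    have h2 : (A - 1) % t₀ < t₀ := Nat.mod_lt _ (by omega)
    omega
  -- main chain
  have hstep : ∑ y, (Q ^ (A - 1)) u y ≤ (1 - a) ^ k := by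
    have : A - 1 = k * t₀ + (A - 1 - k * t₀) := by omega
    rw [this]
    exact le_trans (hmono (k * t₀) _ u) (hgeom k u)
  have hexp1 : (1 - a) ^ k ≤ Real.exp (-a) ^ k := by
    apply pow_le_pow_left₀ (by linarith)
    have := Real.add_one_le_exp (-a)
    linarith
  have hexp2 : Real.exp (-a) ^ k = Real.exp (-(a * k)) := by
    rw [← Real.exp_nat_mul]; ring_nf
  have hfinal : Real.exp (-(a * k)) ≤ Real.exp (-(ε₀ / (2 * t₀)) * A * π u) := by
    rw [Real.exp_le_exp]
    have ht₀R : (0:ℝ) < t₀ := by exact_mod_cast Nat.pos_of_ne_zero (by omega)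
    have hAle : (A : ℝ) ≤ 2 * t₀ * k := by
      have h1 : (A : ℝ) ≤ t₀ * k + t₀ := by exact_mod_cast hup
      have h2 : 2 * (t₀ : ℝ) ≤ A := by exact_mod_cast hA
      linarith
    have key : ε₀ / (2 * t₀) * A * π u ≤ a * k := by
      rw [ha, div_mul_eq_mul_div, div_mul_eq_mul_div, div_le_iff₀ (by linarith)]
      nlinarith [hπ_nonneg u]
    linarith
  calc ∑ y, (Q ^ (A - 1)) u y ≤ (1 - a) ^ k := hstep
    _ ≤ Real.exp (-a) ^ k := hexp1
    _ = Real.exp (-(a * k)) := hexp2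
    _ ≤ _ := hfinal
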